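/- Let n ≥ 1 and let h : ℝⁿ × ℝⁿ → ℝ be a smooth (C^∞) function. Define the vector fields X_c and X¹_h on ℝⁿ × ℝⁿ × ℝ (with coordinates (x,y,z)) by X_c(x,y,z) = (∂h/∂y(x,y), −∂h/∂x(x,y), ⟨y, ∂h/∂y(x,y)⟩) and X¹_h(x,y,z) = (∂h/∂y(x,y), −∂h/∂x(x,y), −h(x,y) + ⟨y, ∂h/∂y(x,y)⟩). Then the Lie bracket [X_c, X¹_h] vanishes identically on ℝⁿ × ℝⁿ × ℝ. -/

import Mathlib

open Matrix

/-- Partial gradient of `h(x,y)` with respect to `x`. -/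
noncomputable def pdx {n : ℕ} (h : (Fin n → ℝ) × (Fin n → ℝ) → ℝ)
    (x y : Fin n → ℝ) : Fin n → ℝ :=
  fun i => fderiv ℝ h (x, y) (Pi.single i 1, 0)

/-- Partial gradient of `h(x,y)` with respect to `y`. -/
noncomputable def pdy {n : ℕ} (h : (Fin n → ℝ) × (Fin n → ℝ) → ℝ)
    (x y : Fin n → ℝ) : Fin n → ℝ :=
  fun i => fderiv ℝ h (x, y) (0, Pi.single i 1)

/-! Write `X¹_h = X_c + V` with the vertical field `V = (0, 0, -h)`. Since `X_c` does not depend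
on `z`, `DX_c` kills the vertical vector `V`; and `DV · X_c = (0, 0, -Dh (∂_y h, -∂_x h)) = 0`
because `h` is constant along its own Hamiltonian flow. Hence
`[X_c, X¹_h] = [X_c, X_c] + [X_c, V] = 0`. -/

open VectorField

theorem fderiv_apply_eq_zero_of_forall_add_smul_eq {𝕜 E F : Type*} [NontriviallyNormedField 𝕜]
    [NormedAddCommGroup E] [NormedSpace 𝕜 E] [NormedAddCommGroup F] [NormedSpace 𝕜 F]
    {f : E → F} {p v : E} (hf : ∀ t : 𝕜, f (p + t • v) = f p) : fderiv 𝕜 f p v = 0 := by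
  by_cases hd : DifferentiableAt 𝕜 f p
  · rw [← hd.lineDeriv_eq_fderiv, lineDeriv, funext hf, deriv_const]
  · rw [fderiv_zero_of_not_differentiableAt hd, _root_.zero_apply]

section partials

variable {n : ℕ} {h : (Fin n → ℝ) × (Fin n → ℝ) → ℝ}

theorem fderiv_apply_eq_dotProduct_pdx_add_dotProduct_pdy (q : (Fin n → ℝ) × (Fin n → ℝ))
    (u v : Fin n → ℝ) :
    fderiv ℝ h q (u, v) = u ⬝ᵥ pdx h q.1 q.2 + v ⬝ᵥ pdy h q.1 q.2 := by
  have huv : ((u, v) : (Fin n → ℝ) × (Fin n → ℝ)) =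
      ∑ i, (u i • (Pi.single i 1, 0) + v i • (0, Pi.single i 1)) := by
    conv_lhs => rw [pi_eq_sum_univ' u, pi_eq_sum_univ' v]
    simp [Prod.ext_iff, Prod.fst_sum, Prod.snd_sum]
  rw [huv, map_sum]
  simp only [map_add, map_smul, smul_eq_mul, Finset.sum_add_distrib, dotProduct]
  rfl

theorem fderiv_apply_pdy_neg_pdx (q : (Fin n → ℝ) × (Fin n → ℝ)) :
    fderiv ℝ h q (pdy h q.1 q.2, -pdx h q.1 q.2) = 0 := by
  rw [fderiv_apply_eq_dotProduct_pdx_add_dotProduct_pdy, neg_dotProduct, dotProduct_comm,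
    add_neg_cancel]

theorem differentiable_pdx (hs : ContDiff ℝ 2 h) :
    Differentiable ℝ fun q : (Fin n → ℝ) × (Fin n → ℝ) => pdx h q.1 q.2 :=
  differentiable_pi.2 fun _ =>
    ((hs.fderiv_right le_rfl).differentiable one_ne_zero).clm_apply (differentiable_const _)

theorem differentiable_pdy (hs : ContDiff ℝ 2 h) :
    Differentiable ℝ fun q : (Fin n → ℝ) × (Fin n → ℝ) => pdy h q.1 q.2 :=
  differentiable_pi.2 fun _ =>
    ((hs.fderiv_right le_rfl).differentiable one_ne_zero).clm_apply (differentiable_const _)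

end partials

theorem fderiv_vertical_apply {𝕜 A B : Type*} [NontriviallyNormedField 𝕜] [NormedAddCommGroup A]
    [NormedSpace 𝕜 A] [NormedAddCommGroup B] [NormedSpace 𝕜 B] {f : A × B → 𝕜} {p w : A × B × 𝕜}
    (hf : DifferentiableAt 𝕜 f (p.1, p.2.1)) :
    fderiv 𝕜 (fun q : A × B × 𝕜 => ((0 : A), (0 : B), f (q.1, q.2.1))) p w =
      (0, 0, fderiv 𝕜 f (p.1, p.2.1) (w.1, w.2.1)) := by
  have hπ : HasFDerivAt (fun q : A × B × 𝕜 => (q.1, q.2.1))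
      ((ContinuousLinearMap.fst 𝕜 A (B × 𝕜)).prod
        ((ContinuousLinearMap.fst 𝕜 B 𝕜).comp (ContinuousLinearMap.snd 𝕜 A (B × 𝕜)))) p :=
    hasFDerivAt_fst.prodMk hasFDerivAt_snd.fst
  have hf' := hf.hasFDerivAt.comp p hπ
  rw [((hasFDerivAt_const 0 p).prodMk ((hasFDerivAt_const 0 p).prodMk hf')).fderiv]
  rfl

theorem bracket_char_oddSymplectic_eq_zero_general (n : ℕ)
    (h : (Fin n → ℝ) × (Fin n → ℝ) → ℝ) (hsmooth : ContDiff ℝ (⊤ : ℕ∞) h)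
    (Xc X1 : (Fin n → ℝ) × (Fin n → ℝ) × ℝ → (Fin n → ℝ) × (Fin n → ℝ) × ℝ)
    (hXc : Xc = fun p =>
      (pdy h p.1 p.2.1, -pdx h p.1 p.2.1, p.2.1 ⬝ᵥ pdy h p.1 p.2.1))
    (hX1 : X1 = fun p =>
      (pdy h p.1 p.2.1, -pdx h p.1 p.2.1,
        -h (p.1, p.2.1) + p.2.1 ⬝ᵥ pdy h p.1 p.2.1)) :
    ∀ p : (Fin n → ℝ) × (Fin n → ℝ) × ℝ,
      fderiv ℝ X1 p (Xc p) - fderiv ℝ Xc p (X1 p) = 0 := by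
  intro p
  set V : (Fin n → ℝ) × (Fin n → ℝ) × ℝ → (Fin n → ℝ) × (Fin n → ℝ) × ℝ :=
    fun q => (0, 0, (-h) (q.1, q.2.1))
  have hX1_eq : X1 = Xc + V := by
    funext q
    simp [hX1, hXc, V, add_comm]
  have hs2 : ContDiff ℝ 2 h := hsmooth.of_le (WithTop.coe_le_coe.2 le_top)
  have hh : Differentiable ℝ h := hs2.differentiable two_ne_zero
  have hXc_diff : DifferentiableAt ℝ Xc p := by
    have hdx := differentiable_pdx hs2
    have hdy := differentiable_pdy hs2
    rw [hXc]
    simp only [dotProduct]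
    fun_prop
  have hV_diff : DifferentiableAt ℝ V p := by fun_prop
  have hXc_vertical : fderiv ℝ Xc p (V p) = 0 :=
    fderiv_apply_eq_zero_of_forall_add_smul_eq fun t => by simp [hXc, V]
  have hV_along_Xc : fderiv ℝ V p (Xc p) = 0 := by
    rw [fderiv_vertical_apply hh.neg.differentiableAt, fderiv_neg]
    simpa [hXc] using fderiv_apply_pdy_neg_pdx (p.1, p.2.1)
  change lieBracket ℝ Xc X1 p = 0
  rw [hX1_eq, lieBracket_add_right hXc_diff hV_diff, lieBracket_self, Pi.zero_apply,
    zero_add, lieBracket, hV_along_Xc, hXc_vertical, sub_zero]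

/-- The Lie bracket of the characteristic vector field `X_c` and the odd-symplectic
(contact) Hamiltonian vector field `X¹_h` of a smooth `z`-independent contact
Hamiltonian `h(x,y)` vanishes identically on `ℝⁿ × ℝⁿ × ℝ`. -/
theorem bracket_char_oddSymplectic_eq_zero (n : ℕ) (hn : 1 ≤ n)
    (h : (Fin n → ℝ) × (Fin n → ℝ) → ℝ) (hsmooth : ContDiff ℝ (⊤ : ℕ∞) h)
    (Xc X1 : (Fin n → ℝ) × (Fin n → ℝ) × ℝ → (Fin n → ℝ) × (Fin n → ℝ) × ℝ)
    (hXc : Xc = fun p =>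
      (pdy h p.1 p.2.1, -pdx h p.1 p.2.1, p.2.1 ⬝ᵥ pdy h p.1 p.2.1))
    (hX1 : X1 = fun p =>
      (pdy h p.1 p.2.1, -pdx h p.1 p.2.1,
        -h (p.1, p.2.1) + p.2.1 ⬝ᵥ pdy h p.1 p.2.1)) :
    ∀ p : (Fin n → ℝ) × (Fin n → ℝ) × ℝ,
      fderiv ℝ X1 p (Xc p) - fderiv ℝ Xc p (X1 p) = 0 :=
  bracket_char_oddSymplectic_eq_zero_general n h hsmooth Xc X1 hXc hX1
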